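/- Let G be a graph with a mixed dominating set D ∪ M satisfying D ∩ V(M) = ∅, and suppose some u ∈ D has exactly one private neighbor v (i.e., exactly one vertex v ∈ V \ (D ∪ V(M)) with N(v) ∩ D = {u}). Then D' = D \ {u} together with M' = M ∪ {(u,v)} is also a mixed dominating set of G, of the same total size, still satisfying D' ∩ V(M') = ∅. -/

import Mathlib

/-!
Put `u` into `V(M')` through the edge `uv`. Every edge covered by `u` stays covered, and a vertex
that loses its only dominator `u` is a private neighbor of `u`, hence is `v`, which now lies in
`V(M')`. Since `v ∉ V(M)`, the edge `uv` is new, so the total size is unchanged.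
-/

variable {V : Type*} [Fintype V] [DecidableEq V]

/-- The set of endpoints of an edge set `M`, i.e. `V(M)`. -/
def mVerts (M : Finset (Sym2 V)) : Finset V :=
  Finset.univ.filter fun v => ∃ e ∈ M, v ∈ e

/-- `D ∪ M` is a mixed dominating set of `G`: every vertex outside `D ∪ V(M)` has a
neighbor in `D`, and every edge outside `M` has an endpoint in `D ∪ V(M)`. -/
def IsMDS (G : SimpleGraph V) (D : Finset V) (M : Finset (Sym2 V)) : Prop :=
  (∀ e ∈ M, e ∈ G.edgeSet) ∧
  (∀ v : V, v ∉ D → v ∉ mVerts M → ∃ u ∈ D, G.Adj u v) ∧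
  (∀ e ∈ G.edgeSet, e ∉ M → ∃ v, v ∈ e ∧ (v ∈ D ∨ v ∈ mVerts M))

/-- `v` is a private neighbor of `u ∈ D`: `v ∉ D ∪ V(M)` and `N(v) ∩ D = {u}`. -/
def PrivNbr (G : SimpleGraph V) (D : Finset V) (M : Finset (Sym2 V)) (u v : V) : Prop :=
  v ∉ D ∧ v ∉ mVerts M ∧ G.Adj u v ∧ ∀ w ∈ D, G.Adj w v → w = u

@[simp]
theorem mem_mVerts {M : Finset (Sym2 V)} {x : V} : x ∈ mVerts M ↔ ∃ e ∈ M, x ∈ e := by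
  simp [mVerts]

theorem mem_mVerts_of_mem {M : Finset (Sym2 V)} {e : Sym2 V} {x : V} (he : e ∈ M)
    (hx : x ∈ e) : x ∈ mVerts M :=
  mem_mVerts.2 ⟨e, he, hx⟩

theorem mVerts_insert_mk (M : Finset (Sym2 V)) (u v : V) :
    mVerts (insert s(u, v) M) = insert u (insert v (mVerts M)) := by
  ext x
  simp only [mem_mVerts, Finset.mem_insert, exists_eq_or_imp, Sym2.mem_iff]
  tauto

section

variable {G : SimpleGraph V} {D D' : Finset V} {M M' : Finset (Sym2 V)}

theorem exists_endpoint_mem_of_subset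
    (hcov : ∀ e ∈ G.edgeSet, e ∉ M → ∃ x, x ∈ e ∧ (x ∈ D ∨ x ∈ mVerts M))
    (hD : ∀ x ∈ D, x ∈ D' ∨ x ∈ mVerts M') (hM : M ⊆ M') :
    ∀ e ∈ G.edgeSet, e ∉ M' → ∃ x, x ∈ e ∧ (x ∈ D' ∨ x ∈ mVerts M') := by
  intro e he heM'
  obtain ⟨x, hxe, hx | hx⟩ := hcov e he (fun heM => heM' (hM heM))
  · exact ⟨x, hxe, hD x hx⟩
  · obtain ⟨f, hf, hxf⟩ := mem_mVerts.1 hx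
    exact ⟨x, hxe, Or.inr (mem_mVerts_of_mem (hM hf) hxf)⟩

theorem exists_adj_mem_erase_of_ne {u v x : V}
    (hdom : ∀ y, y ∉ D → y ∉ mVerts M → ∃ w ∈ D, G.Adj w y)
    (huniq : ∀ w, PrivNbr G D M u w → w = v)
    (hxD : x ∉ D) (hxM : x ∉ mVerts M) (hxv : x ≠ v) :
    ∃ w ∈ D.erase u, G.Adj w x := by
  by_contra! hnone
  obtain ⟨w, hw, hwx⟩ := hdom x hxD hxM
  have only_u : ∀ w' ∈ D, G.Adj w' x → w' = u := fun w' hw' hw'x =>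
    by_contra fun hne => hnone w' (Finset.mem_erase.2 ⟨hne, hw'⟩) hw'x
  have hwu : w = u := only_u w hw hwx
  subst hwu
  exact hxv (huniq x ⟨hxD, hxM, hwx, only_u⟩)

end

/-- If `D ∪ M` is a mixed dominating set with `D ∩ V(M) = ∅` and `u ∈ D` has exactly
one private neighbor `v`, then `D \\ {u}` together with `M ∪ {(u,v)}` is a mixed
dominating set of the same total size, still with `D' ∩ V(M') = ∅`. -/
theorem stmt6 (G : SimpleGraph V) (D : Finset V) (M : Finset (Sym2 V))
    (h : IsMDS G D M) (hdisj : Disjoint D (mVerts M)) (u : V) (hu : u ∈ D) (v : V)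
    (hp : PrivNbr G D M u v) (huniq : ∀ w, PrivNbr G D M u w → w = v) :
    IsMDS G (D.erase u) (insert s(u, v) M) ∧
    Disjoint (D.erase u) (mVerts (insert s(u, v) M)) ∧
    (D.erase u).card + (insert s(u, v) M).card = D.card + M.card := by
  obtain ⟨hM, hdom, hcov⟩ := h
  obtain ⟨hvD, hvM, huv, -⟩ := hp
  have huv_new : s(u, v) ∉ M := fun huvM =>
    hvM (mem_mVerts_of_mem huvM (Sym2.mem_mk_right u v))
  refine ⟨⟨Finset.forall_mem_insert _ _ _ |>.2 ⟨huv, hM⟩, ?_, ?_⟩, ?_, ?_⟩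
  · intro x hxD hxM
    simp only [mVerts_insert_mk, Finset.mem_insert, not_or] at hxM
    obtain ⟨hxu, hxv, hxM⟩ := hxM
    exact exists_adj_mem_erase_of_ne hdom huniq
      (fun hx => hxD (Finset.mem_erase.2 ⟨hxu, hx⟩)) hxM hxv
  · refine exists_endpoint_mem_of_subset hcov (fun x hx => ?_) (Finset.subset_insert _ _)
    by_cases hxu : x = u
    · exact Or.inr (mVerts_insert_mk M u v ▸ Finset.mem_insert.2 (Or.inl hxu))
    · exact Or.inl (Finset.mem_erase.2 ⟨hxu, hx⟩)
  · rw [mVerts_insert_mk, Finset.disjoint_insert_right, Finset.disjoint_insert_right]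
    exact ⟨Finset.notMem_erase u D, fun hv => hvD (Finset.mem_of_mem_erase hv),
      hdisj.mono_left (Finset.erase_subset u D)⟩
  · have := Finset.card_erase_add_one hu
    rw [Finset.card_insert_of_notMem huv_new]
    omega
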